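/- Height derivative identity: let u be a local minimizer of the functional 𝓕 on a ball B containing the closed unit ball, satisfying Assumption A. Then for every r ∈ (0,1) one has H'(r) − ((d−1)/r) H(r) − (2/r) B(r) = 0. -/

import Mathlib

open MeasureTheory Metric Filter
open scoped ENNReal Topology NNReal

noncomputable section

abbrev Euc (d : ℕ) : Type := EuclideanSpace ℝ (Fin d)

/-- The `C^{0,α}` norm of `f` on `s` is bounded by `M`
(sup norm plus `α`-Hölder seminorm bound). -/
def C0NormLe {d : ℕ} {F : Type} [NormedAddCommGroup F] (α : ℝ) (s : Set (Euc d))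
    (f : Euc d → F) (M : ℝ) : Prop :=
  (∀ x ∈ s, ‖f x‖ ≤ M) ∧ ∀ x ∈ s, ∀ y ∈ s, ‖f x - f y‖ ≤ M * ‖x - y‖ ^ α

/-- The `C^{1,α}` norm of `u` on `s` is bounded by `M`. -/
def C1NormLe {d : ℕ} (α : ℝ) (s : Set (Euc d)) (u : Euc d → ℝ) (M : ℝ) : Prop :=
  (∀ x ∈ s, DifferentiableAt ℝ u x) ∧ (∀ x ∈ s, |u x| ≤ M) ∧
    (∀ x ∈ s, ‖gradient u x‖ ≤ M) ∧
    ∀ x ∈ s, ∀ y ∈ s, ‖gradient u x - gradient u y‖ ≤ M * ‖x - y‖ ^ α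

/-- Hypotheses (H1)-(H3) on the nonlinearity `F(x, s, p)`: there are constants `γ, C > 0`
and a neighborhood `U` of the origin on which `F` is Lipschitz in `x` and satisfies the
stated bounds for `F`, `∇ₓF`, `∇ₚF` and `s ∂ₛF`. -/
structure NLHyp (d : ℕ) (F : Euc d → ℝ → Euc d → ℝ) (γ C : ℝ)
    (U : Set (Euc d × ℝ × Euc d)) : Prop where
  gamma_pos : 0 < γ
  C_pos : 0 < C
  U_nhds : U ∈ 𝓝 (0 : Euc d × ℝ × Euc d)
  lip_x : ∃ K : ℝ≥0, ∀ s p, LipschitzOnWith K (fun x => F x s p) {x | (x, s, p) ∈ U}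
  h1 : ∀ x s p, (x, s, p) ∈ U → DifferentiableAt ℝ (fun y => F y s p) x ∧
    |F x s p| + ‖gradient (fun y => F y s p) x‖ ≤ C * (‖p‖ ^ (2 + γ) + |s| ^ 2)
  h2 : ∀ x s p, (x, s, p) ∈ U → DifferentiableAt ℝ (fun w => F x s w) p ∧
    ‖gradient (fun w => F x s w) p‖ ≤ C * (‖p‖ ^ (1 + γ) + |s| ^ (1 + γ))
  h3 : ∀ x s p, (x, s, p) ∈ U →
    DifferentiableAt ℝ (fun t : ℝ => F x (s * (1 + t)) p) 0 ∧
    |deriv (fun t : ℝ => F x (s * (1 + t)) p) 0| ≤ C * (‖p‖ ^ (2 + γ) + |s| ^ 2)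

/-- `u ∈ W^{1,q}(B)`: `u` and its gradient are in `L^q(B)`. -/
def MemW1 {d : ℕ} (q : ℝ) (B : Set (Euc d)) (u : Euc d → ℝ) : Prop :=
  MemLp u (ENNReal.ofReal q) (volume.restrict B) ∧
    MemLp (gradient u) (ENNReal.ofReal q) (volume.restrict B)

/-- `u` is a local minimizer of `φ ↦ ∫_B L (x, φ x, ∇φ x)` among `W^{1,q}(B)` competitors
that differ from `u` on a compact subset of `B`. -/
def IsMinimizer {d : ℕ} (B : Set (Euc d)) (q : ℝ) (L : Euc d → ℝ → Euc d → ℝ)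
    (u : Euc d → ℝ) : Prop :=
  MemW1 q B u ∧ ∀ v : Euc d → ℝ, MemW1 q B v → HasCompactSupport (v - u) →
    tsupport (v - u) ⊆ B →
    ∫ x in B, L x (u x) (gradient u x) ≤ ∫ x in B, L x (v x) (gradient v x)

/-- Assumption A: `‖u‖_{C^{1,α}(B)} ≤ δ` for some `δ ∈ (0, δ₀)`, and linear
`C^{0,α}`–`L²` estimates for `u` and `∇u` on all balls contained in `B`. -/
def AssumptionA {d : ℕ} (B : Set (Euc d)) (u : Euc d → ℝ) (α δ₀ : ℝ) : Prop :=
  0 < α ∧ α < 1 ∧ 0 < δ₀ ∧ δ₀ < 1 ∧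
    (∃ δ, 0 < δ ∧ δ < δ₀ ∧ C1NormLe α B u δ) ∧
    ∃ C > (0 : ℝ), ∀ (x : Euc d) (r : ℝ), 0 < r → ball x r ⊆ B →
      C0NormLe α (ball x (r / 2)) u (C * ⨍ y in ball x r, (u y) ^ 2) ∧
      C0NormLe α (ball x (r / 2)) (gradient u) (C / r * ⨍ y in ball x r, (u y) ^ 2)

/-- The cutoff function `φ`: equal to `1` on `(0, 1-υ]`, affine on `(1-υ, 1]`,
and `0` on `(1, ∞)`. -/
def cutoff (υ : ℝ) (t : ℝ) : ℝ :=
  if t ≤ 1 - υ then 1 else if t ≤ 1 then (1 - t) / (1 - υ) else 0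

/-- The height function `H(r) = -∫ φ'(|x|/r) u(x)²/|x| dx`. -/
def Hh {d : ℕ} (υ : ℝ) (u : Euc d → ℝ) (r : ℝ) : ℝ :=
  -(∫ x : Euc d, deriv (cutoff υ) (‖x‖ / r) * (u x) ^ 2 / ‖x‖)

/-- The energy `D₀(r) = ∫ φ(|x|/r) |∇u|² dx`. -/
def D0 {d : ℕ} (υ : ℝ) (u : Euc d → ℝ) (r : ℝ) : ℝ :=
  ∫ x : Euc d, cutoff υ (‖x‖ / r) * ‖gradient u x‖ ^ 2

/-- The lower-order energy `D_l(r) = ∫ φ(|x|/r) u ∂ₛF(x, u, ∇u) dx`, where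
`u ∂ₛF(x, u, ∇u)` is the derivative at `t = 0` of `t ↦ F(x, u(1+t), ∇u)`. -/
def Dl {d : ℕ} (υ : ℝ) (F : Euc d → ℝ → Euc d → ℝ) (u : Euc d → ℝ) (r : ℝ) : ℝ :=
  ∫ x : Euc d, cutoff υ (‖x‖ / r) *
    deriv (fun t : ℝ => F x (u x * (1 + t)) (gradient u x)) 0

/-- The full energy `D(r) = D₀(r) + D_l(r)`. -/
def Dd {d : ℕ} (υ : ℝ) (F : Euc d → ℝ → Euc d → ℝ) (u : Euc d → ℝ) (r : ℝ) : ℝ :=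
  D0 υ u r + Dl υ F u r

/-- `A(r) = -∫ φ'(|x|/r) |x| (∇u · x/|x|)² dx`. -/
def Aa {d : ℕ} (υ : ℝ) (u : Euc d → ℝ) (r : ℝ) : ℝ :=
  -(∫ x : Euc d, deriv (cutoff υ) (‖x‖ / r) * ‖x‖ *
      ((inner ℝ (gradient u x) x : ℝ) / ‖x‖) ^ 2)

/-- `B(r) = -∫ φ'(|x|/r) u (∇u · x/|x|) dx`. -/
def Bb {d : ℕ} (υ : ℝ) (u : Euc d → ℝ) (r : ℝ) : ℝ :=
  -(∫ x : Euc d, deriv (cutoff υ) (‖x‖ / r) * u x *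
      ((inner ℝ (gradient u x) x : ℝ) / ‖x‖))

/-- `G(r) = ∫ φ(|x|/r) u² dx`. -/
def Gg {d : ℕ} (υ : ℝ) (u : Euc d → ℝ) (r : ℝ) : ℝ :=
  ∫ x : Euc d, cutoff υ (‖x‖ / r) * (u x) ^ 2

/-- The Almgren-type frequency `N(r) = r D(r) / H(r)`. -/
def Nfreq {d : ℕ} (υ : ℝ) (F : Euc d → ℝ → Euc d → ℝ) (u : Euc d → ℝ) (r : ℝ) : ℝ :=
  r * Dd υ F u r / Hh υ u r

open Set InnerProductSpace

/-!
Substituting `x = r • y` turns `H(r)` into `-r^(d-1) ∫_{|y| ≤ 1} k(y) u(r y)² dy` and `B(r)` into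
`-r^d ∫_{|y| ≤ 1} k(y) u(r y) (∇u(r y) · y) dy` with the fixed kernel `k(y) = φ'(|y|) / |y|`,
which is bounded and vanishes outside the unit ball. Differentiating the first integral in `r`
under the integral sign, with domination coming from the `C¹` bounds of Assumption A, gives
`H'(r) = ((d-1)/r) H(r) + (2/r) B(r)`.
-/

lemma deriv_eq_zero_of_eqOn_Iic {f : ℝ → ℝ} {a c : ℝ} (hf : EqOn f (fun _ => c) (Iic a)) :
    deriv f a = 0 := by
  by_cases hd : DifferentiableAt ℝ f a
  · rw [← hd.derivWithin (uniqueDiffWithinAt_Iic a), derivWithin_congr hf (hf self_mem_Iic),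
      derivWithin_fun_const, Pi.zero_apply]
  · exact deriv_zero_of_not_differentiableAt hd

section Cutoff

variable {υ : ℝ}

lemma cutoff_eq_max_of_lt (hυ : υ < 1) {t : ℝ} (ht : 1 - υ < t) :
    cutoff υ t = max ((1 - t) / (1 - υ)) 0 := by
  have h1υ : 0 < 1 - υ := sub_pos.2 hυ
  rw [cutoff, if_neg ht.not_ge]
  split_ifs with h
  · exact (max_eq_left (div_nonneg (sub_nonneg.2 h) h1υ.le)).symm
  · exact (max_eq_right (div_nonpos_of_nonpos_of_nonneg (by linarith) h1υ.le)).symm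

-- `cutoff υ` jumps at `1 - υ` (its right limit there is `υ / (1 - υ)`), so only the
-- one-sided argument of `deriv_eq_zero_of_eqOn_Iic` applies at that point.
lemma deriv_cutoff_of_le {t : ℝ} (ht : t ≤ 1 - υ) : deriv (cutoff υ) t = 0 :=
  deriv_eq_zero_of_eqOn_Iic (c := 1) fun _ hs => if_pos (hs.out.trans ht)

lemma deriv_cutoff_of_one_lt (hυ : 0 ≤ υ) {t : ℝ} (ht : 1 < t) : deriv (cutoff υ) t = 0 := by
  have : cutoff υ =ᶠ[𝓝 t] fun _ => 0 := by
    filter_upwards [Ioi_mem_nhds ht] with s hs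
    rw [cutoff, if_neg (by linarith [hs.out]), if_neg hs.out.not_ge]
  rw [this.deriv_eq, deriv_const]

lemma abs_deriv_cutoff_le (hυ : υ < 1) (t : ℝ) : |deriv (cutoff υ) t| ≤ (1 - υ)⁻¹ := by
  have h1υ : 0 < 1 - υ := sub_pos.2 hυ
  rcases le_or_gt t (1 - υ) with ht | ht
  · rw [deriv_cutoff_of_le ht, abs_zero]
    exact inv_nonneg.2 h1υ.le
  have hlip : LipschitzOnWith (Real.toNNReal (1 - υ)⁻¹) (cutoff υ) (Ioi (1 - υ)) := by
    refine LipschitzOnWith.of_dist_le_mul fun s hs s' hs' => ?_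
    rw [cutoff_eq_max_of_lt hυ hs, cutoff_eq_max_of_lt hυ hs',
      Real.coe_toNNReal _ (inv_nonneg.2 h1υ.le)]
    refine (abs_max_sub_max_le_abs _ _ _).trans_eq ?_
    rw [Real.dist_eq, ← sub_div, abs_div, abs_of_pos h1υ, abs_sub_comm, div_eq_inv_mul]
    ring_nf
  simpa [inv_nonneg.2 h1υ.le] using norm_deriv_le_of_lipschitzOn (Ioi_mem_nhds ht) hlip

end Cutoff

section RadialWeight

variable {E : Type*} [NormedAddCommGroup E] {υ : ℝ}

def radialWeight (υ : ℝ) (y : E) : ℝ := deriv (cutoff υ) ‖y‖ / ‖y‖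

lemma radialWeight_eq_zero (hυ : 0 ≤ υ) {y : E} (hy : 1 < ‖y‖) : radialWeight υ y = 0 := by
  rw [radialWeight, deriv_cutoff_of_one_lt hυ hy, zero_div]

lemma abs_radialWeight_le (hυ : υ < 1) (y : E) : |radialWeight υ y| ≤ (1 - υ)⁻¹ ^ 2 := by
  have h1υ : 0 < 1 - υ := sub_pos.2 hυ
  rcases le_or_gt ‖y‖ (1 - υ) with hy | hy
  · rw [radialWeight, deriv_cutoff_of_le hy, zero_div, abs_zero]
    positivity
  · rw [radialWeight, abs_div, abs_norm, sq]
    exact div_le_div₀ (by positivity) (abs_deriv_cutoff_le hυ _) h1υ hy.le |>.trans_eq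
      (div_eq_mul_inv _ _)

lemma integrableOn_radialWeight [NormedSpace ℝ E] [ProperSpace E] [MeasurableSpace E]
    [BorelSpace E] {μ : Measure E} [IsFiniteMeasureOnCompacts μ] (hυ : υ < 1) :
    IntegrableOn (radialWeight υ) (closedBall 0 1) μ :=
  Measure.integrableOn_of_bounded measure_closedBall_lt_top.ne
    (((measurable_deriv _).comp measurable_norm).div measurable_norm).aestronglyMeasurable
    (ae_of_all _ fun y => abs_radialWeight_le hυ y)

end RadialWeight

lemma integral_eq_pow_mul_integral_comp_smul {E : Type*} [NormedAddCommGroup E]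
    [NormedSpace ℝ E] [FiniteDimensional ℝ E] [MeasurableSpace E] [BorelSpace E]
    (μ : Measure E) [μ.IsAddHaarMeasure] (f : E → ℝ) {r : ℝ} (hr : 0 < r) :
    ∫ x, f x ∂μ = r ^ Module.finrank ℝ E * ∫ y, f (r • y) ∂μ := by
  rw [Measure.integral_comp_smul, abs_of_pos (by positivity), smul_eq_mul, ← mul_assoc,
    mul_inv_cancel₀ (by positivity), one_mul]

section RadialDerivative

variable {E : Type*} [NormedAddCommGroup E] [InnerProductSpace ℝ E] [CompleteSpace E]

lemma hasDerivAt_comp_smul {u : E → ℝ} {r : ℝ} {y : E} (hu : DifferentiableAt ℝ u (r • y)) :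
    HasDerivAt (fun s : ℝ => u (s • y)) ⟪gradient u (r • y), y⟫_ℝ r := by
  simpa [Function.comp_def, toDual_apply_apply] using
    hu.hasGradientAt.hasFDerivAt.comp_hasDerivAt r ((hasDerivAt_id r).smul_const y)

variable [MeasurableSpace E] [BorelSpace E]

lemma measurable_gradient (u : E → ℝ) : Measurable (gradient u) :=
  (toDual ℝ E).symm.continuous.measurable.comp (measurable_fderiv ℝ u)

theorem hasDerivAt_integral_mul_sq_comp_smul [SecondCountableTopology E] {μ : Measure E}
    {k u : E → ℝ} {M r₀ : ℝ}
    (hk : IntegrableOn k (closedBall 0 1) μ)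
    (hu : ∀ x ∈ closedBall (0 : E) 1, DifferentiableAt ℝ u x)
    (hu_le : ∀ x ∈ closedBall (0 : E) 1, |u x| ≤ M)
    (hgrad_le : ∀ x ∈ closedBall (0 : E) 1, ‖gradient u x‖ ≤ M) (hr₀ : |r₀| < 1) :
    HasDerivAt (fun r => ∫ y in closedBall 0 1, k y * u (r • y) ^ 2 ∂μ)
      (2 * ∫ y in closedBall 0 1, k y * (u (r₀ • y) * ⟪gradient u (r₀ • y), y⟫_ℝ) ∂μ) r₀ := by
  set S := closedBall (0 : E) 1
  have hS : ∀ {r : ℝ}, |r| ≤ 1 → MapsTo (fun y : E => r • y) S S := fun hr y hy => by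
    simpa [S, norm_smul] using mul_le_one₀ hr (norm_nonneg y) (mem_closedBall_zero_iff.1 hy)
  have hnhds : {r : ℝ | |r| < 1} ∈ 𝓝 r₀ :=
    (isOpen_lt continuous_abs continuous_const).mem_nhds hr₀
  have hcont : ContinuousOn u S := fun x hx => (hu x hx).continuousAt.continuousWithinAt
  have hmeas : ∀ {r : ℝ}, |r| ≤ 1 → AEStronglyMeasurable (fun y => u (r • y)) (μ.restrict S) :=
    fun hr => (hcont.comp (continuous_const_smul _).continuousOn (hS hr)).aestronglyMeasurable
      measurableSet_closedBall
  have hinner_le : ∀ {r : ℝ}, |r| ≤ 1 → ∀ y ∈ S, |⟪gradient u (r • y), y⟫_ℝ| ≤ M := fun hr y hy =>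
    (abs_real_inner_le_norm _ _).trans (mul_le_of_le_one_right (norm_nonneg _)
      (mem_closedBall_zero_iff.1 hy) |>.trans (hgrad_le _ (hS hr hy)))
  have hM : 0 ≤ M := (abs_nonneg _).trans (hu_le 0 (mem_closedBall_self zero_le_one))
  have key := hasDerivAt_integral_of_dominated_loc_of_deriv_le (μ := μ.restrict S)
    (F := fun r y => k y * u (r • y) ^ 2)
    (F' := fun r y => 2 * (k y * (u (r • y) * ⟪gradient u (r • y), y⟫_ℝ)))
    (bound := fun y => 2 * (‖k y‖ * (M * M))) hnhds
    (by filter_upwards [hnhds] with r hr using hk.1.mul ((hmeas (le_of_lt hr)).pow 2))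
    ((hk.norm.mul_const (M * M)).mono' (hk.1.mul ((hmeas hr₀.le).pow 2))
      (ae_restrict_of_forall_mem measurableSet_closedBall fun y hy => ?_))
    ((aestronglyMeasurable_const.mul (hk.1.mul ((hmeas hr₀.le).mul
      (((measurable_gradient u).comp (measurable_const_smul r₀)).aestronglyMeasurable.inner
        aestronglyMeasurable_id)))))
    (ae_restrict_of_forall_mem measurableSet_closedBall fun y hy r hr => ?_)
    ((hk.norm.mul_const _).const_mul 2)
    (ae_restrict_of_forall_mem measurableSet_closedBall fun y hy r hr => ?_)
  · rw [← integral_const_mul]; exact key.2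
  · have : |u (r₀ • y)| ≤ M := hu_le _ (hS hr₀.le hy)
    simp only [norm_mul, Real.norm_eq_abs, sq]
    gcongr
  · have : |u (r • y)| ≤ M := hu_le _ (hS (le_of_lt hr) hy)
    have := hinner_le (le_of_lt hr) y hy
    simp only [norm_mul, Real.norm_eq_abs, abs_two]
    gcongr
  · refine (((hasDerivAt_comp_smul (hu _ (hS (le_of_lt hr) hy))).fun_pow 2).const_mul
      (k y)).congr_deriv ?_
    push_cast
    ring

section HeightAndB

variable {d : ℕ} {υ : ℝ} {u : Euc d → ℝ} {r : ℝ}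

lemma Hh_eq_zpow_mul_integral (hυ : 0 ≤ υ) (hr : 0 < r) :
    Hh υ u r = -(r ^ ((d : ℤ) - 1) *
      ∫ y in closedBall 0 1, radialWeight υ y * u (r • y) ^ 2) := by
  have hpt : ∀ y : Euc d, deriv (cutoff υ) (‖r • y‖ / r) * u (r • y) ^ 2 / ‖r • y‖ =
      radialWeight υ y * u (r • y) ^ 2 / r := fun y => by
    rw [norm_smul, Real.norm_eq_abs, abs_of_pos hr, mul_div_cancel_left₀ _ hr.ne', radialWeight]
    field_simp
  rw [Hh, integral_eq_pow_mul_integral_comp_smul volume _ hr, finrank_euclideanSpace_fin,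
    integral_congr_ae (ae_of_all _ hpt), integral_div,
    setIntegral_eq_integral_of_forall_compl_eq_zero fun y hy => by
      rw [radialWeight_eq_zero hυ (by simpa using hy), zero_mul],
    zpow_sub_one₀ hr.ne', zpow_natCast]
  ring

lemma Bb_eq_pow_mul_integral (hυ : 0 ≤ υ) (hr : 0 < r) :
    Bb υ u r = -(r ^ d * ∫ y in closedBall 0 1,
      radialWeight υ y * (u (r • y) * ⟪gradient u (r • y), y⟫_ℝ)) := by
  have hpt : ∀ y : Euc d, deriv (cutoff υ) (‖r • y‖ / r) * u (r • y) *
      (⟪gradient u (r • y), r • y⟫_ℝ / ‖r • y‖) =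
      radialWeight υ y * (u (r • y) * ⟪gradient u (r • y), y⟫_ℝ) := fun y => by
    rw [norm_smul, Real.norm_eq_abs, abs_of_pos hr, mul_div_cancel_left₀ _ hr.ne',
      real_inner_smul_right, mul_div_mul_left _ _ hr.ne', radialWeight]
    ring
  rw [Bb, integral_eq_pow_mul_integral_comp_smul volume _ hr, finrank_euclideanSpace_fin,
    integral_congr_ae (ae_of_all _ hpt),
    setIntegral_eq_integral_of_forall_compl_eq_zero fun y hy => by
      rw [radialWeight_eq_zero hυ (by simpa using hy), zero_mul]]

end HeightAndB

theorem height_derivative_identity_general {d : ℕ}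
    (υ : ℝ) (hυ : υ ∈ Set.Ioo (1 / 2 : ℝ) 1)
    (c₀ : Euc d) (R : ℝ) (hB : closedBall (0 : Euc d) 1 ⊆ ball c₀ R)
    (u : Euc d → ℝ)
    (α δ₀ : ℝ) (hA : AssumptionA (ball c₀ R) u α δ₀) :
    ∀ r ∈ Set.Ioo (0 : ℝ) 1,
      deriv (Hh υ u) r - ((d : ℝ) - 1) / r * Hh υ u r - 2 / r * Bb υ u r = 0 := by
  obtain ⟨-, -, -, -, ⟨δ, -, -, hu_diff, hu_le, hgrad_le, -⟩, -⟩ := hA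
  rintro r ⟨hr₀, hr₁⟩
  have hυ₀ : 0 ≤ υ := by linarith [hυ.1]
  set J := fun s : ℝ => ∫ y in closedBall (0 : Euc d) 1, radialWeight υ y * u (s • y) ^ 2
  set b := ∫ y in closedBall (0 : Euc d) 1,
    radialWeight υ y * (u (r • y) * ⟪gradient u (r • y), y⟫_ℝ)
  have hJ : HasDerivAt J (2 * b) r :=
    hasDerivAt_integral_mul_sq_comp_smul (integrableOn_radialWeight hυ.2)
      (fun x hx => hu_diff x (hB hx)) (fun x hx => hu_le x (hB hx))
      (fun x hx => hgrad_le x (hB hx)) (by rwa [abs_of_pos hr₀])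
  have hH_eq : ∀ s, 0 < s → Hh υ u s = -(s ^ ((d : ℤ) - 1) * J s) :=
    fun s hs => Hh_eq_zpow_mul_integral hυ₀ hs
  have hH : HasDerivAt (Hh υ u) (-(((d : ℤ) - 1 : ℤ) * r ^ ((d : ℤ) - 1 - 1) * J r +
      r ^ ((d : ℤ) - 1) * (2 * b))) r :=
    (((hasDerivAt_zpow _ r (.inl hr₀.ne')).mul hJ).neg).congr_of_eventuallyEq <| by
      filter_upwards [Ioi_mem_nhds hr₀] with s hs using hH_eq s hs
  have hB_eq : Bb υ u r = -(r ^ d * b) := Bb_eq_pow_mul_integral hυ₀ hr₀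
  rw [hH.deriv, hH_eq r hr₀, hB_eq, zpow_sub_one₀ hr₀.ne', zpow_sub_one₀ hr₀.ne', zpow_natCast]
  push_cast
  field_simp
  ring

/-- **Height derivative identity** (Lemma 3.1, eq. (3.10)): for a local minimizer `u`
satisfying Assumption A on a ball containing the closed unit ball, for every `r ∈ (0,1)`
one has `H'(r) - ((d-1)/r) H(r) - (2/r) B(r) = 0`. -/
theorem height_derivative_identity {d : ℕ} (hd : 2 ≤ d)
    (υ : ℝ) (hυ : υ ∈ Set.Ioo (1 / 2 : ℝ) 1)
    (c₀ : Euc d) (R : ℝ) (hR : 0 < R) (hB : closedBall (0 : Euc d) 1 ⊆ ball c₀ R)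
    (F : Euc d → ℝ → Euc d → ℝ) (γ C : ℝ) (U : Set (Euc d × ℝ × Euc d))
    (hF : NLHyp d F γ C U) (q : ℝ) (hq : 2 ≤ q) (u : Euc d → ℝ)
    (hu : IsMinimizer (ball c₀ R) q (fun x s p => ‖p‖ ^ 2 / 2 + F x s p) u)
    (α δ₀ : ℝ) (hA : AssumptionA (ball c₀ R) u α δ₀) :
    ∀ r ∈ Set.Ioo (0 : ℝ) 1,
      deriv (Hh υ u) r - ((d : ℝ) - 1) / r * Hh υ u r - 2 / r * Bb υ u r = 0 :=
  height_derivative_identity_general υ hυ c₀ R hB u α δ₀ hA
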